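/- arXiv:2105.06312 — 4 statements merged into one kernel-verified Lean document; each statement's English description precedes it below -/
import Mathlib

section
/- Suppose (f_n) is a sequence of convex functions on an open interval A ⊆ ℝ converging pointwise to a function f on A. If each f_n and f are differentiable at a point t₀ ∈ A, then f_n'(t₀) converges to f'(t₀). -/
/-!
The derivative of a convex function at `t₀` is squeezed between the difference quotients
`slope (fₙ) t₀ u` and `slope (fₙ) t₀ v` for `u < t₀ < v`, and these converge to the
corresponding difference quotients of `f` by pointwise convergence. Since `f` is differentiable
at `t₀`, its difference quotients on either side are as close to `f'(t₀)` as we like.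
-/

open Filter Set Topology

theorem Filter.Tendsto.slope {ι 𝕜 E : Type*} [Field 𝕜] [AddCommGroup E] [Module 𝕜 E]
    [TopologicalSpace E] [ContinuousSub E] [ContinuousConstSMul 𝕜 E]
    {l : Filter ι} {g : ι → 𝕜 → E} {G : 𝕜 → E} {x y : 𝕜}
    (hx : Tendsto (fun n ↦ g n x) l (𝓝 (G x))) (hy : Tendsto (fun n ↦ g n y) l (𝓝 (G y))) :
    Tendsto (fun n ↦ slope (g n) x y) l (𝓝 (slope G x y)) :=
  (hy.sub hx).const_smul _

section ConvexLimit

variable {ι : Type*} {l : Filter ι} {S : Set ℝ} {fn : ι → ℝ → ℝ} {f : ℝ → ℝ} {t₀ L r : ℝ}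

theorem ConvexOn.eventually_deriv_lt_of_tendsto (hS : S ∈ 𝓝 t₀)
    (hconv : ∀ n, ConvexOn ℝ S (fn n))
    (hlim : ∀ t ∈ S, Tendsto (fun n ↦ fn n t) l (𝓝 (f t)))
    (hdn : ∀ n, DifferentiableAt ℝ (fn n) t₀) (hf : HasDerivAt f L t₀) (hr : L < r) :
    ∀ᶠ n in l, deriv (fn n) t₀ < r := by
  obtain ⟨v, hv_slope, hv, hvS⟩ : ∃ v, slope f t₀ v < r ∧ v ∈ Ioi t₀ ∩ S :=
    (((hasDerivAt_iff_tendsto_slope_left_right.1 hf).2.eventually (gt_mem_nhds hr)).and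
      (inter_mem_nhdsWithin (Ioi t₀) hS)).exists
  filter_upwards [((hlim t₀ (mem_of_mem_nhds hS)).slope (hlim v hvS)).eventually
    (gt_mem_nhds hv_slope)] with n hn
  exact ((hconv n).deriv_le_slope (mem_of_mem_nhds hS) hvS hv (hdn n)).trans_lt hn

theorem ConvexOn.eventually_lt_deriv_of_tendsto (hS : S ∈ 𝓝 t₀)
    (hconv : ∀ n, ConvexOn ℝ S (fn n))
    (hlim : ∀ t ∈ S, Tendsto (fun n ↦ fn n t) l (𝓝 (f t)))
    (hdn : ∀ n, DifferentiableAt ℝ (fn n) t₀) (hf : HasDerivAt f L t₀) (hr : r < L) :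
    ∀ᶠ n in l, r < deriv (fn n) t₀ := by
  obtain ⟨u, hu_slope, hu, huS⟩ : ∃ u, r < slope f t₀ u ∧ u ∈ Iio t₀ ∩ S :=
    (((hasDerivAt_iff_tendsto_slope_left_right.1 hf).1.eventually (lt_mem_nhds hr)).and
      (inter_mem_nhdsWithin (Iio t₀) hS)).exists
  filter_upwards [((hlim t₀ (mem_of_mem_nhds hS)).slope (hlim u huS)).eventually
    (lt_mem_nhds hu_slope)] with n hn
  rw [slope_comm] at hn
  exact hn.trans_le ((hconv n).slope_le_deriv huS (mem_of_mem_nhds hS) hu (hdn n))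

theorem ConvexOn.tendsto_deriv_of_tendsto (hS : S ∈ 𝓝 t₀)
    (hconv : ∀ n, ConvexOn ℝ S (fn n))
    (hlim : ∀ t ∈ S, Tendsto (fun n ↦ fn n t) l (𝓝 (f t)))
    (hdn : ∀ n, DifferentiableAt ℝ (fn n) t₀) (hf : HasDerivAt f L t₀) :
    Tendsto (fun n ↦ deriv (fn n) t₀) l (𝓝 L) :=
  tendsto_order.2
    ⟨fun _ hr ↦ eventually_lt_deriv_of_tendsto hS hconv hlim hdn hf hr,
      fun _ hr ↦ eventually_deriv_lt_of_tendsto hS hconv hlim hdn hf hr⟩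

end ConvexLimit

/-- If convex functions fₙ on an open interval (a,b) converge pointwise to f, and
each fₙ and f are differentiable at t₀ ∈ (a,b), then fₙ'(t₀) → f'(t₀). -/
theorem stmt7 (a b : ℝ) (f : ℝ → ℝ) (fn : ℕ → ℝ → ℝ) (t₀ : ℝ)
    (ht₀ : t₀ ∈ Set.Ioo a b)
    (hconv : ∀ n, ConvexOn ℝ (Set.Ioo a b) (fn n))
    (hlim : ∀ t ∈ Set.Ioo a b,
      Filter.Tendsto (fun n => fn n t) Filter.atTop (nhds (f t)))
    (hdn : ∀ n, DifferentiableAt ℝ (fn n) t₀)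
    (hdf : DifferentiableAt ℝ f t₀) :
    Filter.Tendsto (fun n => deriv (fn n) t₀) Filter.atTop (nhds (deriv f t₀)) :=
  ConvexOn.tendsto_deriv_of_tendsto (isOpen_Ioo.mem_nhds ht₀) hconv hlim hdn hdf.hasDerivAt
end

section
/- Let (Y_n) be real random variables with densities ℓ_n(y) ∝ exp(−(81/64)y⁴ + k y⁵/√n)·1_{|y| ≤ n^{1/2−δ}} / √((u* + y/√n)(1 − u* − y/√n)), where u* ∈ (0,1), k ∈ ℝ, δ ∈ (0, 3/8). Then Y_n converges in distribution to the random variable Y with density ℓ(y) ∝ e^{−(81/64)y⁴}, and E|Y_n| → E|Y|. -/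
/-! On the window `|y| ≤ n^{1/2-δ}` we have `|y/√n| ≤ n^{-δ} → 0`. Hence the quintic term
`k y⁵/√n = k (y/√n) y⁴` is eventually at most half of `(81/64) y⁴`, and the square-root factor stays
above `√(u(1-u))/2`: the unnormalized densities are eventually dominated by a multiple of
`exp(-(81/128) y⁴)`, which is integrable even against `1 + |y|`. They converge pointwise to
`exp(-(81/64) y⁴)/√(u(1-u))`, so dominated convergence applies to the numerator and to the
normalizing constant alike, and the factor `1/√(u(1-u))` cancels in the quotient. -/

open MeasureTheory

/-- Unnormalized density exp(−(81/64)y⁴ + k y⁵/√n)/√((u*+y/√n)(1−u*−y/√n)) on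
{|y| ≤ n^{1/2−δ}}. -/
noncomputable def phiC (u k δ : ℝ) (n : ℕ) (y : ℝ) : ℝ :=
  if |y| ≤ (n : ℝ) ^ ((1 : ℝ) / 2 - δ) then
    Real.exp (-(81 / 64) * y ^ 4 + k * y ^ 5 / Real.sqrt n) /
      Real.sqrt ((u + y / Real.sqrt n) * (1 - u - y / Real.sqrt n))
  else 0

/-- The normalized density ℓₙ. -/
noncomputable def ellC (u k δ : ℝ) (n : ℕ) (y : ℝ) : ℝ :=
  phiC u k δ n y / ∫ t, phiC u k δ n t

/-- Limiting density ℓ(y) ∝ e^{−(81/64)y⁴}. -/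
noncomputable def ellLimC (y : ℝ) : ℝ :=
  Real.exp (-(81 / 64) * y ^ 4) / ∫ t : ℝ, Real.exp (-(81 / 64) * t ^ 4)

open Filter Topology Real

section NormalizedDensities

variable {α ι : Type*} [MeasurableSpace α] {μ : Measure α} {l : Filter ι}
  [l.IsCountablyGenerated] {φ : ι → α → ℝ} {ψ g w : α → ℝ}

theorem tendsto_integral_mul_of_dominated {c : ℝ}
    (hφ : ∀ᶠ i in l, AEStronglyMeasurable (φ i) μ) (hw : AEStronglyMeasurable w μ)
    (hwg : Integrable (fun x => w x * g x) μ) (hbound : ∀ᶠ i in l, ∀ᵐ x ∂μ, |φ i x| ≤ g x)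
    (hlim : ∀ᵐ x ∂μ, Tendsto (fun i => φ i x) l (𝓝 (c * ψ x))) :
    Tendsto (fun i => ∫ x, w x * φ i x ∂μ) l (𝓝 (c * ∫ x, w x * ψ x ∂μ)) := by
  rw [← integral_const_mul]
  refine tendsto_integral_filter_of_dominated_convergence (fun x => ‖w x * g x‖)
    (hφ.mono fun i hi => hw.mul hi) ?_ hwg.norm ?_
  · filter_upwards [hbound] with i hi
    filter_upwards [hi] with x hx
    rw [norm_mul, norm_mul]
    exact mul_le_mul_of_nonneg_left (hx.trans (le_abs_self _)) (norm_nonneg _)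
  · filter_upwards [hlim] with x hx
    simpa only [mul_left_comm c] using hx.const_mul (w x)

theorem tendsto_integral_mul_div_integral_of_dominated {c : ℝ} (hc : c ≠ 0)
    (hψ : ∫ x, ψ x ∂μ ≠ 0)
    (hφ : ∀ᶠ i in l, AEStronglyMeasurable (φ i) μ) (hw : AEStronglyMeasurable w μ)
    (hg : Integrable g μ) (hwg : Integrable (fun x => w x * g x) μ)
    (hbound : ∀ᶠ i in l, ∀ᵐ x ∂μ, |φ i x| ≤ g x)
    (hlim : ∀ᵐ x ∂μ, Tendsto (fun i => φ i x) l (𝓝 (c * ψ x))) :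
    Tendsto (fun i => ∫ x, w x * (φ i x / ∫ t, φ i t ∂μ) ∂μ) l
      (𝓝 (∫ x, w x * (ψ x / ∫ t, ψ t ∂μ) ∂μ)) := by
  have hnum := tendsto_integral_mul_of_dominated hφ hw hwg hbound hlim
  have hden := tendsto_integral_mul_of_dominated (w := fun _ => 1) hφ
    aestronglyMeasurable_const (by simpa using hg) hbound hlim
  simp only [one_mul] at hden
  simp only [← mul_div_assoc, integral_div]
  rw [← mul_div_mul_left _ _ hc]
  exact hnum.div hden (mul_ne_zero hc hψ)

end NormalizedDensities

section QuarticDecay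

variable {a : ℝ}

theorem exp_neg_mul_pow_four_le (ha : 0 ≤ a) (y : ℝ) :
    exp (-a * y ^ 4) ≤ exp a * exp (-a * y ^ 2) := by
  rw [← exp_add, exp_le_exp]
  nlinarith [sq_nonneg (y ^ 2 - 1), sq_nonneg y]

theorem integrable_exp_neg_mul_pow_four (ha : 0 < a) :
    Integrable fun y : ℝ => exp (-a * y ^ 4) :=
  ((integrable_exp_neg_mul_sq ha).const_mul (exp a)).mono' (by fun_prop)
    (.of_forall fun y => by
      simpa only [norm_of_nonneg (exp_pos _).le] using exp_neg_mul_pow_four_le ha.le y)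

theorem integrable_abs_mul_exp_neg_mul_pow_four (ha : 0 < a) :
    Integrable fun y : ℝ => |y| * exp (-a * y ^ 4) :=
  ((integrable_mul_exp_neg_mul_sq ha).norm.const_mul (exp a)).mono' (by fun_prop)
    (.of_forall fun y => by
      rw [norm_mul, norm_mul, norm_of_nonneg (exp_pos _).le, norm_of_nonneg (exp_pos _).le,
        norm_abs_eq_norm, mul_left_comm]
      exact mul_le_mul_of_nonneg_left (exp_neg_mul_pow_four_le ha.le y) (norm_nonneg _))

end QuarticDecay

section PhiC

variable {u k δ : ℝ}

theorem measurable_phiC (u k δ : ℝ) (n : ℕ) : Measurable (phiC u k δ n) :=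
  Measurable.ite (measurableSet_le (by fun_prop) measurable_const) (by fun_prop) measurable_const

theorem tendsto_phiC (hu : u ∈ Set.Ioo 0 1) (hδ : δ < 1 / 2) (y : ℝ) :
    Tendsto (fun n : ℕ => phiC u k δ n y) atTop
      (𝓝 ((√(u * (1 - u)))⁻¹ * exp (-(81 / 64) * y ^ 4))) := by
  have hu' : 0 < u * (1 - u) := mul_pos hu.1 (sub_pos.2 hu.2)
  have hinv : Tendsto (fun n : ℕ => (√n)⁻¹) atTop (𝓝 0) :=
    tendsto_inv_atTop_zero.comp (tendsto_sqrt_atTop.comp tendsto_natCast_atTop_atTop)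
  have hwindow : ∀ᶠ n : ℕ in atTop, |y| ≤ (n : ℝ) ^ ((1 : ℝ) / 2 - δ) :=
    ((tendsto_rpow_atTop (by linarith)).comp tendsto_natCast_atTop_atTop).eventually_ge_atTop _
  have hF : ContinuousAt (fun h => exp (-(81 / 64) * y ^ 4 + k * y ^ 5 * h) /
      √((u + y * h) * (1 - u - y * h))) 0 := by
    fun_prop (disch := simpa using (sqrt_pos.2 hu').ne')
  convert (hF.tendsto.comp hinv).congr' ?_ using 2
  · simp [div_eq_inv_mul]
  filter_upwards [hwindow] with n hn
  rw [Function.comp_apply, phiC, if_pos hn]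
  simp only [div_eq_mul_inv]

theorem abs_div_sqrt_le_rpow_neg {n : ℕ} (hn : 0 < n) {y : ℝ}
    (hy : |y| ≤ (n : ℝ) ^ ((1 : ℝ) / 2 - δ)) : |y / √n| ≤ (n : ℝ) ^ (-δ) := by
  have hn' : (0 : ℝ) < n := Nat.cast_pos.2 hn
  rw [abs_div, abs_of_nonneg (sqrt_nonneg _), div_le_iff₀ (sqrt_pos.2 hn'), sqrt_eq_rpow,
    ← rpow_add hn', neg_add_eq_sub]
  exact hy

theorem half_sqrt_le_sqrt_mul_of_abs_le {t : ℝ} (ht₁ : |t| ≤ u / 2)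
    (ht₂ : |t| ≤ (1 - u) / 2) : √(u * (1 - u)) / 2 ≤ √((u + t) * (1 - u - t)) := by
  obtain ⟨hlow, hhigh⟩ := abs_le.1 ht₁
  obtain ⟨hlow', hhigh'⟩ := abs_le.1 ht₂
  rw [show √(u * (1 - u)) / 2 = √(u / 2 * ((1 - u) / 2)) by
    rw [show u / 2 * ((1 - u) / 2) = u * (1 - u) / 2 ^ 2 by ring, sqrt_div' _ (by norm_num),
      sqrt_sq two_pos.le]]
  exact sqrt_le_sqrt (mul_le_mul (by linarith) (by linarith) (by linarith) (by linarith))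

theorem quartic_exponent_le {y s : ℝ} (h : |k * (y / s)| ≤ 81 / 128) :
    -(81 / 64) * y ^ 4 + k * y ^ 5 / s ≤ -(81 / 128) * y ^ 4 := by
  have hpert : k * (y / s) * y ^ 4 ≤ 81 / 128 * y ^ 4 :=
    mul_le_mul_of_nonneg_right ((le_abs_self _).trans h) (by positivity)
  linarith [show k * y ^ 5 / s = k * (y / s) * y ^ 4 by ring]

theorem abs_phiC_le (hu : u ∈ Set.Ioo 0 1) {n : ℕ} (hn : 0 < n)
    (hnu : (n : ℝ) ^ (-δ) ≤ u / 2) (hnu' : (n : ℝ) ^ (-δ) ≤ (1 - u) / 2)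
    (hnk : |k| * (n : ℝ) ^ (-δ) ≤ 81 / 128) (y : ℝ) :
    |phiC u k δ n y| ≤ 2 / √(u * (1 - u)) * exp (-(81 / 128) * y ^ 4) := by
  have hs : 0 < √(u * (1 - u)) := sqrt_pos.2 (mul_pos hu.1 (sub_pos.2 hu.2))
  unfold phiC
  split_ifs with hy
  · have ht := abs_div_sqrt_le_rpow_neg hn hy
    have hexp := quartic_exponent_le (k := k) (s := √n)
      ((abs_mul k _).trans_le ((mul_le_mul_of_nonneg_left ht (abs_nonneg k)).trans hnk))
    have hsqrt := half_sqrt_le_sqrt_mul_of_abs_le (ht.trans hnu) (ht.trans hnu')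
    rw [abs_of_nonneg (by positivity)]
    calc _ ≤ exp (-(81 / 128) * y ^ 4) / (√(u * (1 - u)) / 2) :=
          div_le_div₀ (exp_pos _).le (exp_le_exp.2 hexp) (by positivity) hsqrt
      _ = _ := by ring
  · rw [abs_zero]
    positivity

theorem eventually_abs_phiC_le (hu : u ∈ Set.Ioo 0 1) (hδ : 0 < δ) :
    ∀ᶠ n : ℕ in atTop, ∀ y,
      |phiC u k δ n y| ≤ 2 / √(u * (1 - u)) * exp (-(81 / 128) * y ^ 4) := by
  have hdecay : Tendsto (fun n : ℕ => (n : ℝ) ^ (-δ)) atTop (𝓝 0) :=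
    (tendsto_rpow_neg_atTop hδ).comp tendsto_natCast_atTop_atTop
  have hk : Tendsto (fun n : ℕ => |k| * (n : ℝ) ^ (-δ)) atTop (𝓝 0) := by
    simpa using hdecay.const_mul |k|
  filter_upwards [eventually_gt_atTop 0,
    hdecay.eventually_le_const (half_pos hu.1),
    hdecay.eventually_le_const (half_pos (sub_pos.2 hu.2)),
    hk.eventually_le_const (by norm_num : (0 : ℝ) < 81 / 128)] with n hn hnu hnu' hnk
  exact abs_phiC_le hu hn hnu hnu' hnk

end PhiC

/-- Yₙ with density ℓₙ converges in distribution to Y with density ∝ e^{−(81/64)y⁴},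
and E|Yₙ| → E|Y|. -/
theorem stmt15 (u k δ : ℝ) (hu : u ∈ Set.Ioo (0 : ℝ) 1)
    (hδ : δ ∈ Set.Ioo (0 : ℝ) (3 / 8)) :
    (∀ f : BoundedContinuousFunction ℝ ℝ,
        Filter.Tendsto (fun n : ℕ => ∫ y, f y * ellC u k δ n y) Filter.atTop
          (nhds (∫ y, f y * ellLimC y))) ∧
      Filter.Tendsto (fun n : ℕ => ∫ y, |y| * ellC u k δ n y) Filter.atTop
        (nhds (∫ y, |y| * ellLimC y)) := by
  have hs : 0 < √(u * (1 - u)) := sqrt_pos.2 (mul_pos hu.1 (sub_pos.2 hu.2))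
  have hdecay := integrable_exp_neg_mul_pow_four (by norm_num : (0 : ℝ) < 81 / 128)
  have key : ∀ w : ℝ → ℝ, AEStronglyMeasurable w →
      Integrable (fun y => w y * exp (-(81 / 128) * y ^ 4)) →
      Tendsto (fun n : ℕ => ∫ y, w y * ellC u k δ n y) atTop (𝓝 (∫ y, w y * ellLimC y)) :=
    fun w hw hwg => tendsto_integral_mul_div_integral_of_dominated (inv_ne_zero hs.ne')
      (integral_exp_pos (integrable_exp_neg_mul_pow_four (by norm_num))).ne'
      (.of_forall fun n => (measurable_phiC u k δ n).aestronglyMeasurable) hw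
      (hdecay.const_mul _)
      (by simpa only [mul_left_comm] using hwg.const_mul (2 / √(u * (1 - u))))
      ((eventually_abs_phiC_le hu hδ.1).mono fun n hn => .of_forall hn)
      (.of_forall (tendsto_phiC hu (by linarith [hδ.2])))
  refine ⟨fun f => key f f.continuous.aestronglyMeasurable ?_,
    key _ (by fun_prop) (integrable_abs_mul_exp_neg_mul_pow_four (by norm_num))⟩
  exact hdecay.bdd_mul f.continuous.aestronglyMeasurable (.of_forall f.norm_coe_le_norm)
end

section
/- Let (X_n) be real random variables with densities ℓ_n(x) ∝ exp(−c x² + k x³/n)·1_{|x| ≤ n^{1−δ}} / √((u* + x/n)(1 − u* − x/n)), where c > 0, k ∈ ℝ, u* ∈ (0,1), δ ∈ (0,1). Then X_n converges in distribution to a centered Gaussian with variance 1/(2c), and E(X_n) → 0 and E|X_n| → E|N(0,1/(2c))|. -/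
open MeasureTheory

/-- Unnormalized density exp(−c x² + k x³/n)/√((u*+x/n)(1−u*−x/n)) on {|x| ≤ n^{1−δ}}. -/
noncomputable def phiG (u c k δ : ℝ) (n : ℕ) (x : ℝ) : ℝ :=
  if |x| ≤ (n : ℝ) ^ ((1 : ℝ) - δ) then
    Real.exp (-c * x ^ 2 + k * x ^ 3 / n) /
      Real.sqrt ((u + x / n) * (1 - u - x / n))
  else 0

/-- The normalized density ℓₙ. -/
noncomputable def ellG (u c k δ : ℝ) (n : ℕ) (x : ℝ) : ℝ :=
  phiG u c k δ n x / ∫ t, phiG u c k δ n t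

/-- Centered Gaussian density with variance 1/(2c): √(c/π)·e^{−c x²}. -/
noncomputable def gaussDens (c : ℝ) (x : ℝ) : ℝ :=
  Real.sqrt (c / Real.pi) * Real.exp (-c * x ^ 2)

/-!
On the support `|x| ≤ n^(1-δ)` of `phiG` we have `|x / n| ≤ n^(-δ) → 0`. Hence eventually the
cubic term `k x³ / n = (k x / n) x²` is at most `c x² / 2` and the square-root factor is at least
half its limit `√(u (1 - u))`, so the unnormalized densities are uniformly dominated by a multiple
of `exp (-c x² / 2)`, while they converge pointwise to `exp (-c x²) / √(u (1 - u))`. Dominated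
convergence then passes to the limit in `∫ g(x) phiG n x dx` for every measurable `g` of linear
growth, `g = 1` included, and normalizing turns the limit into the Gaussian density, whose mean is
`0` by symmetry.
-/

open Filter Topology Real

lemma integrable_one_add_abs_mul_exp_neg_mul_sq {b : ℝ} (hb : 0 < b) :
    Integrable (fun x : ℝ => (1 + |x|) * exp (-b * x ^ 2)) := by
  refine ((integrable_exp_neg_mul_sq hb).add (integrable_mul_exp_neg_mul_sq hb).norm).congr
    (ae_of_all _ fun x => ?_)
  simp only [Pi.add_apply, norm_mul, Real.norm_eq_abs, abs_of_pos (exp_pos _)]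
  ring

lemma tendsto_integral_mul_of_le_exp_neg_mul_sq {ι : Type*} {l : Filter ι}
    [l.IsCountablyGenerated] {φ : ι → ℝ → ℝ} {ψ g : ℝ → ℝ} {b C M : ℝ} (hb : 0 < b)
    (hφ : ∀ i, Measurable (φ i)) (hg : Measurable g) (hgM : ∀ x, |g x| ≤ M * (1 + |x|))
    (hφC : ∀ᶠ i in l, ∀ x, |φ i x| ≤ C * exp (-b * x ^ 2))
    (hφψ : ∀ x, Tendsto (fun i => φ i x) l (𝓝 (ψ x))) :
    Tendsto (fun i => ∫ x, g x * φ i x) l (𝓝 (∫ x, g x * ψ x)) := by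
  refine tendsto_integral_filter_of_dominated_convergence
    (fun x => M * C * ((1 + |x|) * exp (-b * x ^ 2)))
    (Eventually.of_forall fun i => (hg.mul (hφ i)).aestronglyMeasurable) ?_
    ((integrable_one_add_abs_mul_exp_neg_mul_sq hb).const_mul (M * C))
    (Eventually.of_forall fun x => (hφψ x).const_mul (g x))
  filter_upwards [hφC] with i hi
  refine ae_of_all _ fun x => ?_
  calc ‖g x * φ i x‖ = |g x| * |φ i x| := by rw [norm_mul, Real.norm_eq_abs, Real.norm_eq_abs]
    _ ≤ M * (1 + |x|) * (C * exp (-b * x ^ 2)) :=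
      mul_le_mul (hgM x) (hi x) (abs_nonneg _) ((abs_nonneg _).trans (hgM x))
    _ = M * C * ((1 + |x|) * exp (-b * x ^ 2)) := by ring

lemma tendsto_integral_mul_div_integral {α ι : Type*} [MeasurableSpace α] {μ : Measure α}
    {l : Filter ι} {φ : ι → α → ℝ} {ψ g : α → ℝ}
    (hg : Tendsto (fun i => ∫ x, g x * φ i x ∂μ) l (𝓝 (∫ x, g x * ψ x ∂μ)))
    (h1 : Tendsto (fun i => ∫ x, φ i x ∂μ) l (𝓝 (∫ x, ψ x ∂μ))) (hψ : ∫ x, ψ x ∂μ ≠ 0) :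
    Tendsto (fun i => ∫ x, g x * (φ i x / ∫ t, φ i t ∂μ) ∂μ) l
      (𝓝 (∫ x, g x * (ψ x / ∫ t, ψ t ∂μ) ∂μ)) := by
  simp_rw [← mul_div_assoc, integral_div]
  exact hg.div h1 hψ

lemma gaussDens_eq_div_integral {c a : ℝ} (hc : 0 < c) (ha : a ≠ 0) :
    gaussDens c = fun x => exp (-c * x ^ 2) / a / ∫ t, exp (-c * t ^ 2) / a := by
  funext x
  rw [integral_div, integral_gaussian, gaussDens, ← inv_div, sqrt_inv]
  field_simp

lemma integral_mul_gaussDens_eq_zero (c : ℝ) : ∫ x, x * gaussDens c x = 0 := by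
  have hodd := integral_neg_eq_self (fun x : ℝ => x * gaussDens c x) volume
  simp only [gaussDens, even_two.neg_pow, neg_mul, integral_neg] at hodd ⊢
  linarith

section Density

variable {u c k δ : ℝ}

lemma phiG_nonneg (n : ℕ) (x : ℝ) : 0 ≤ phiG u c k δ n x := by
  unfold phiG
  split_ifs <;> positivity

lemma measurable_phiG (n : ℕ) : Measurable (phiG u c k δ n) :=
  Measurable.ite (measurableSet_le (by fun_prop) (by fun_prop)) (by fun_prop) measurable_const

lemma tendsto_phiG (hu : u ∈ Set.Ioo (0 : ℝ) 1) (hδ : δ < 1) (x : ℝ) :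
    Tendsto (fun n : ℕ => phiG u c k δ n x) atTop (𝓝 (exp (-c * x ^ 2) / √(u * (1 - u)))) := by
  have hs : √(u * (1 - u)) ≠ 0 := (sqrt_pos.2 (mul_pos hu.1 (sub_pos.2 hu.2))).ne'
  have hF : ContinuousAt
      (fun t : ℝ => exp (-c * x ^ 2 + k * x ^ 3 * t) / √((u + x * t) * (1 - u - x * t))) 0 := by
    fun_prop (disch := simpa using hs)
  have hsupp : ∀ᶠ n : ℕ in atTop, |x| ≤ (n : ℝ) ^ ((1 : ℝ) - δ) :=
    ((tendsto_rpow_atTop (sub_pos.2 hδ)).comp tendsto_natCast_atTop_atTop).eventually_ge_atTop _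
  have hlim := hF.tendsto.comp tendsto_inv_atTop_nhds_zero_nat
  simp only [Function.comp_def, mul_zero, add_zero, sub_zero] at hlim
  refine hlim.congr' ?_
  filter_upwards [hsupp] with n hn
  simp [phiG, hn, div_eq_mul_inv]

lemma abs_div_le_rpow_neg {x n : ℝ} (hn : 0 < n) (hx : |x| ≤ n ^ (1 - δ)) :
    |x / n| ≤ n ^ (-δ) := by
  rwa [abs_div, abs_of_pos hn, div_le_iff₀ hn, ← rpow_add_one hn.ne', neg_add_eq_sub]

lemma sqrt_mul_one_sub_le {t : ℝ} (ht : |t| ≤ min u (1 - u) / 2) :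
    √(u * (1 - u)) / 2 ≤ √((u + t) * (1 - u - t)) := by
  have ⟨ht₁, ht₂⟩ := abs_le.1 ht
  have hprod : u * (1 - u) / 2 ^ 2 ≤ (u + t) * (1 - u - t) := by
    nlinarith [min_le_left u (1 - u), min_le_right u (1 - u)]
  calc √(u * (1 - u)) / 2 = √(u * (1 - u) / 2 ^ 2) := by
        rw [sqrt_div' _ (by positivity), sqrt_sq zero_le_two]
    _ ≤ √((u + t) * (1 - u - t)) := sqrt_le_sqrt hprod

lemma eventually_phiG_le (hu : u ∈ Set.Ioo (0 : ℝ) 1) (hc : 0 < c) (hδ : 0 < δ) :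
    ∀ᶠ n : ℕ in atTop, ∀ x,
      phiG u c k δ n x ≤ 2 / √(u * (1 - u)) * exp (-(c / 2) * x ^ 2) := by
  have hε : Tendsto (fun n : ℕ => (n : ℝ) ^ (-δ)) atTop (𝓝 0) :=
    (tendsto_rpow_neg_atTop hδ).comp tendsto_natCast_atTop_atTop
  have hs : 0 < √(u * (1 - u)) := sqrt_pos.2 (mul_pos hu.1 (sub_pos.2 hu.2))
  filter_upwards [(hε.const_mul |k|).eventually_le_const
      (show |k| * 0 < c / 2 by rw [mul_zero]; exact half_pos hc),
    hε.eventually_le_const (half_pos (lt_min hu.1 (sub_pos.2 hu.2))),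
    eventually_gt_atTop 0] with n hk ht hn x
  unfold phiG
  split_ifs with hx
  · have hxn := abs_div_le_rpow_neg (Nat.cast_pos.2 hn) hx
    have hkx : |k * (x / n)| ≤ c / 2 := by
      rw [abs_mul]
      exact (mul_le_mul_of_nonneg_left hxn (abs_nonneg k)).trans hk
    have hexp : -c * x ^ 2 + k * x ^ 3 / n ≤ -(c / 2) * x ^ 2 := by
      have : k * x ^ 3 / n = k * (x / n) * x ^ 2 := by ring
      nlinarith [le_abs_self (k * (x / n)), sq_nonneg x]
    calc exp (-c * x ^ 2 + k * x ^ 3 / n) / √((u + x / n) * (1 - u - x / n))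
        ≤ exp (-(c / 2) * x ^ 2) / (√(u * (1 - u)) / 2) :=
          div_le_div₀ (exp_pos _).le (exp_le_exp.2 hexp) (half_pos hs)
            (sqrt_mul_one_sub_le (hxn.trans ht))
      _ = 2 / √(u * (1 - u)) * exp (-(c / 2) * x ^ 2) := by ring
  · positivity

lemma tendsto_integral_mul_phiG (hu : u ∈ Set.Ioo (0 : ℝ) 1) (hc : 0 < c)
    (hδ : δ ∈ Set.Ioo (0 : ℝ) 1) {g : ℝ → ℝ} {M : ℝ} (hg : Measurable g)
    (hgM : ∀ x, |g x| ≤ M * (1 + |x|)) :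
    Tendsto (fun n : ℕ => ∫ x, g x * phiG u c k δ n x) atTop
      (𝓝 (∫ x, g x * (exp (-c * x ^ 2) / √(u * (1 - u))))) :=
  tendsto_integral_mul_of_le_exp_neg_mul_sq (half_pos hc) measurable_phiG hg hgM
    (by simpa only [abs_of_nonneg (phiG_nonneg _ _)] using eventually_phiG_le hu hc hδ.1)
    (tendsto_phiG hu hδ.2)

lemma tendsto_integral_mul_ellG (hu : u ∈ Set.Ioo (0 : ℝ) 1) (hc : 0 < c)
    (hδ : δ ∈ Set.Ioo (0 : ℝ) 1) {g : ℝ → ℝ} {M : ℝ} (hg : Measurable g)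
    (hgM : ∀ x, |g x| ≤ M * (1 + |x|)) :
    Tendsto (fun n : ℕ => ∫ x, g x * ellG u c k δ n x) atTop (𝓝 (∫ x, g x * gaussDens c x)) := by
  have hs : 0 < √(u * (1 - u)) := sqrt_pos.2 (mul_pos hu.1 (sub_pos.2 hu.2))
  have hZ := tendsto_integral_mul_phiG (k := k) hu hc hδ (g := fun _ => 1) (M := 1)
    measurable_const fun x => by simp
  simp only [one_mul] at hZ
  rw [gaussDens_eq_div_integral hc hs.ne']
  refine tendsto_integral_mul_div_integral (tendsto_integral_mul_phiG hu hc hδ hg hgM) hZ ?_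
  rw [integral_div, integral_gaussian]
  positivity

end Density

/-- Xₙ with density ℓₙ converges in distribution to N(0, 1/(2c)); moreover
E(Xₙ) → 0 and E|Xₙ| → E|N(0,1/(2c))|. -/
theorem stmt16 (u c k δ : ℝ) (hu : u ∈ Set.Ioo (0 : ℝ) 1) (hc : 0 < c)
    (hδ : δ ∈ Set.Ioo (0 : ℝ) 1) :
    (∀ f : BoundedContinuousFunction ℝ ℝ,
        Filter.Tendsto (fun n : ℕ => ∫ x, f x * ellG u c k δ n x) Filter.atTop
          (nhds (∫ x, f x * gaussDens c x))) ∧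
      Filter.Tendsto (fun n : ℕ => ∫ x, x * ellG u c k δ n x) Filter.atTop
        (nhds 0) ∧
      Filter.Tendsto (fun n : ℕ => ∫ x, |x| * ellG u c k δ n x) Filter.atTop
        (nhds (∫ x, |x| * gaussDens c x)) := by
  have h_linear : ∀ x : ℝ, |x| ≤ 1 * (1 + |x|) := fun x => by linarith
  refine ⟨fun f => ?_, ?_, ?_⟩
  · refine tendsto_integral_mul_ellG (M := ‖f‖) hu hc hδ f.continuous.measurable fun x => ?_
    calc |f x| ≤ ‖f‖ := f.norm_coe_le_norm x
      _ ≤ ‖f‖ * (1 + |x|) := le_mul_of_one_le_right (norm_nonneg f) (by simp)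
  · have h := tendsto_integral_mul_ellG (k := k) hu hc hδ measurable_id' h_linear
    rwa [integral_mul_gaussDens_eq_zero] at h
  · simpa only [abs_abs] using
      tendsto_integral_mul_ellG hu hc hδ continuous_abs.measurable fun x =>
        (abs_abs x).trans_le (h_linear x)
end

section
/- Assume g : [0,1] → ℝ is continuous, attains its maximum at the unique point u* ∈ (0,1), and let a_n(m) be weights with c n^{−1} e^{n² g(m)} ≤ a_n(m) ≤ C n e^{n² g(m)} for all m in the grid Γ_n = {2k/n² : 0 ≤ k ≤ n(n−1)/2}. Then for every δ > 0, (Σ_{m∈Γ_n, |m−u*|≥δ} a_n(m)) / (Σ_{m∈Γ_n} a_n(m)) → 0 exponentially fast as n → ∞, i.e., there exists κ > 0 with the ratio bounded by e^{−κ n²} for large n. -/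
/-!
Off the δ-neighbourhood of u*, compactness gives a uniform gap: g ≤ g(u*) − ε there. By
continuity, the grid point 2⌊u* n²/2⌋/n² just below u* has g ≥ g(u*) − ε/4 for large n. So each
of the at most n² far terms is at most C n e^{n²(g(u*) − ε)}, while the whole sum is at least
the single term c n⁻¹ e^{n²(g(u*) − ε/4)}; the ratio is at most (C/c) n⁴ e^{−3εn²/4}, which is
eventually below e^{−εn²/2}.
-/

open scoped Classical

open Filter Topology Finset Real

theorem IsCompact.exists_uniform_gap_of_unique_max {X : Type*} [PseudoMetricSpace X]
    {K : Set X} (hK : IsCompact K) {g : X → ℝ} (hg : ContinuousOn g K) {u : X}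
    (hmax : ∀ m ∈ K, m ≠ u → g m < g u) {δ : ℝ} (hδ : 0 < δ) :
    ∃ ε > 0, ∀ m ∈ K, δ ≤ dist m u → g m ≤ g u - ε := by
  set S := K ∩ {m | δ ≤ dist m u}
  rcases S.eq_empty_or_nonempty with hS | hS
  · exact ⟨1, one_pos, fun m hm hmδ => (hS.subset ⟨hm, hmδ⟩).elim⟩
  have hSc : IsCompact S :=
    hK.inter_right (isClosed_le continuous_const (continuous_id.dist continuous_const))
  obtain ⟨m₀, ⟨hm₀K, hm₀δ⟩, hm₀⟩ := hSc.exists_isMaxOn hS (hg.mono Set.inter_subset_left)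
  have hne : m₀ ≠ u := by
    rintro rfl
    have h : δ ≤ dist m₀ m₀ := hm₀δ
    rw [dist_self] at h
    linarith
  refine ⟨g u - g m₀, sub_pos.2 (hmax m₀ hm₀K hne), fun m hm hmδ => ?_⟩
  linarith [isMaxOn_iff.1 hm₀ m ⟨hm, hmδ⟩]

theorem Finset.sum_filter_div_sum_le_of_exp_bounds {ι : Type*} {s : Finset ι} {p : ι → Prop}
    [DecidablePred p] {w f : ι → ℝ} {lam c C M : ℝ} {i₀ : ι} (hi₀ : i₀ ∈ s) (hc : 0 < c)
    (hlam : 0 ≤ lam) (hlow : ∀ i ∈ s, c * exp (lam * f i) ≤ w i)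
    (hup : ∀ i ∈ s, w i ≤ C * exp (lam * f i)) (hM : ∀ i ∈ s, p i → f i ≤ M) :
    (∑ i ∈ s with p i, w i) / ∑ i ∈ s, w i ≤
      #(s.filter p) * (C / c) * exp (lam * (M - f i₀)) := by
  have hC : 0 ≤ C := hc.le.trans <|
    le_of_mul_le_mul_right ((hlow i₀ hi₀).trans (hup i₀ hi₀)) (exp_pos _)
  have hden : c * exp (lam * f i₀) ≤ ∑ i ∈ s, w i :=
    (hlow i₀ hi₀).trans <|
      single_le_sum (fun i hi => (mul_nonneg hc.le (exp_pos _).le).trans (hlow i hi)) hi₀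
  have hnum : ∑ i ∈ s with p i, w i ≤ #(s.filter p) * (C * exp (lam * M)) := by
    rw [← nsmul_eq_mul]
    refine sum_le_card_nsmul _ _ _ fun i hi => ?_
    obtain ⟨his, hpi⟩ := mem_filter.1 hi
    exact (hup i his).trans <| by gcongr; exact hM i his hpi
  calc (∑ i ∈ s with p i, w i) / ∑ i ∈ s, w i
      ≤ #(s.filter p) * (C * exp (lam * M)) / (c * exp (lam * f i₀)) :=
        div_le_div₀ (by positivity) hnum (by positivity) hden
    _ = #(s.filter p) * (C / c) * exp (lam * (M - f i₀)) := by
        rw [mul_sub, exp_sub]; field_simp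

theorem Finset.sum_filter_bind_pure_natCast {R : Type} {M : Type*} [AddMonoidWithOne R]
    [CharZero R] [AddCommMonoid M] (s : Finset ℕ) (p : R → Prop) [DecidablePred p] (f : R → M) :
    ∑ x ∈ (s >>= fun k => pure (k : R)) with p x, f x =
      ∑ k ∈ s.filter fun k : ℕ => p k, f k := by
  rw [bind_pure_comp, fmap_def, filter_image, sum_image Nat.cast_injective.injOn]

theorem eventually_const_mul_pow_le_exp (A : ℝ) {b : ℝ} (hb : 0 < b) (k : ℕ) :
    ∀ᶠ x : ℝ in atTop, A * x ^ k ≤ exp (b * x) := by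
  filter_upwards [((isLittleO_pow_exp_pos_mul_atTop k hb).const_mul_left A).bound one_pos]
    with x hx
  rw [norm_of_nonneg (exp_pos _).le, one_mul] at hx
  exact (le_abs_self _).trans hx

theorem two_mul_div_sq_mem_Icc {n k : ℕ} (hk : k ≤ n * (n - 1) / 2) :
    2 * (k : ℝ) / (n : ℝ) ^ 2 ∈ Set.Icc (0 : ℝ) 1 := by
  refine ⟨by positivity, div_le_one_of_le₀ ?_ (by positivity)⟩
  have : 2 * k ≤ n ^ 2 := calc
    2 * k ≤ n * (n - 1) := by omega
    _ ≤ n * n := Nat.mul_le_mul_left n (Nat.sub_le n 1)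
    _ = n ^ 2 := (sq n).symm
  exact_mod_cast this

theorem Nat.mul_sub_one_div_two_add_one_le_sq {n : ℕ} (hn : 1 ≤ n) :
    n * (n - 1) / 2 + 1 ≤ n ^ 2 := by
  have h1 : n * (n - 1) / 2 ≤ n * (n - 1) := Nat.div_le_self _ _
  have h2 : n * (n - 1) + n = n ^ 2 := by
    obtain ⟨m, rfl⟩ := Nat.exists_eq_add_of_le hn
    simp only [Nat.add_sub_cancel_left]; ring
  omega

theorem tendsto_natCast_sq_atTop : Tendsto (fun n : ℕ => (n : ℝ) ^ 2) atTop atTop :=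
  (tendsto_pow_atTop two_ne_zero).comp tendsto_natCast_atTop_atTop

theorem tendsto_two_mul_floor_div_sq {u : ℝ} (hu : 0 ≤ u) :
    Tendsto (fun n : ℕ => 2 * (⌊u * ((n : ℝ) ^ 2 / 2)⌋₊ : ℝ) / (n : ℝ) ^ 2) atTop (𝓝 u) := by
  refine ((tendsto_nat_floor_mul_div_atTop hu).comp
    (tendsto_natCast_sq_atTop.atTop_div_const two_pos)).congr fun n => ?_
  simp only [Function.comp_apply, div_div_eq_mul_div]
  ring

theorem eventually_nat_floor_mul_sq_div_two_le {u : ℝ} (hu : u < 1) :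
    ∀ᶠ n : ℕ in atTop, ⌊u * ((n : ℝ) ^ 2 / 2)⌋₊ ≤ n * (n - 1) / 2 := by
  filter_upwards [eventually_ge_atTop 1,
    tendsto_natCast_atTop_atTop.eventually_ge_atTop (1 - u)⁻¹] with n hn hnu
  have hn' : (1 : ℝ) ≤ (1 - u) * n := by
    have := mul_le_mul_of_nonneg_left hnu (sub_pos.2 hu).le
    rwa [mul_inv_cancel₀ (sub_pos.2 hu).ne'] at this
  calc ⌊u * ((n : ℝ) ^ 2 / 2)⌋₊ ≤ ⌊((n * (n - 1) : ℕ) : ℝ) / 2⌋₊ := by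
        refine Nat.floor_le_floor ?_
        rw [Nat.cast_mul, Nat.cast_sub hn, Nat.cast_one]
        nlinarith
    _ = n * (n - 1) / 2 := by exact_mod_cast Nat.floor_div_eq_div (n * (n - 1)) 2

/-- Laplace-type concentration on the grid Γₙ = {2k/n² : 0 ≤ k ≤ n(n−1)/2}: if g is
continuous with strict unique maximizer u* ∈ (0,1), and the weights aₙ(m) satisfy
c n⁻¹ e^{n²g(m)} ≤ aₙ(m) ≤ C n e^{n²g(m)}, then for every δ > 0 the relative weight
of {m : |m − u*| ≥ δ} decays like e^{−κn²}. -/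
theorem stmt18 (g : ℝ → ℝ) (u : ℝ) (hu : u ∈ Set.Ioo (0 : ℝ) 1)
    (hg : ContinuousOn g (Set.Icc 0 1))
    (hmax : ∀ m ∈ Set.Icc (0 : ℝ) 1, m ≠ u → g m < g u)
    (a : ℕ → ℝ → ℝ) (c C : ℝ) (hc : 0 < c) (hC : 0 < C)
    (hbound : ∀ n : ℕ, 2 ≤ n → ∀ k : ℕ, k ≤ n * (n - 1) / 2 →
      c * (n : ℝ)⁻¹ * Real.exp ((n : ℝ) ^ 2 * g (2 * (k : ℝ) / (n : ℝ) ^ 2)) ≤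
          a n (2 * (k : ℝ) / (n : ℝ) ^ 2) ∧
        a n (2 * (k : ℝ) / (n : ℝ) ^ 2) ≤
          C * (n : ℝ) * Real.exp ((n : ℝ) ^ 2 * g (2 * (k : ℝ) / (n : ℝ) ^ 2)))
    (δ : ℝ) (hδ : 0 < δ) :
    ∃ κ > (0 : ℝ), ∀ᶠ n : ℕ in Filter.atTop,
      (∑ k ∈ (Finset.range (n * (n - 1) / 2 + 1)).filter
            fun k => δ ≤ |2 * (k : ℝ) / (n : ℝ) ^ 2 - u|,
          a n (2 * (k : ℝ) / (n : ℝ) ^ 2)) /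
        (∑ k ∈ Finset.range (n * (n - 1) / 2 + 1),
          a n (2 * (k : ℝ) / (n : ℝ) ^ 2)) ≤
      Real.exp (-κ * (n : ℝ) ^ 2) := by
  obtain ⟨ε, hε, hgap⟩ := isCompact_Icc.exists_uniform_gap_of_unique_max hg hmax hδ
  have hnear : ∀ᶠ n : ℕ in atTop,
      g u - ε / 4 < g (2 * (⌊u * ((n : ℝ) ^ 2 / 2)⌋₊ : ℝ) / (n : ℝ) ^ 2) :=
    ((hg.continuousAt (Icc_mem_nhds hu.1 hu.2)).tendsto.comp
      (tendsto_two_mul_floor_div_sq hu.1.le)).eventually (lt_mem_nhds (by linarith))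
  refine ⟨ε / 2, half_pos hε, ?_⟩
  filter_upwards [eventually_ge_atTop 2, hnear, eventually_nat_floor_mul_sq_div_two_le hu.2,
    tendsto_natCast_sq_atTop.eventually (eventually_const_mul_pow_le_exp (C / c)
      (by positivity : 0 < ε / 4) 2)] with n hn hgk₀ hk₀ hexp
  -- The filter predicate is on `ℝ`, so the numerator's `range` is lifted to `Finset ℝ` through
  -- the `Finset` monad.
  rw [sum_filter_bind_pure_natCast]
  refine (sum_filter_div_sum_le_of_exp_bounds (mem_range_succ_iff.2 hk₀)
    (by positivity : 0 < c * (n : ℝ)⁻¹) (by positivity : (0 : ℝ) ≤ (n : ℝ) ^ 2)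
    (fun k hk => (hbound n hn k (mem_range_succ_iff.1 hk)).1)
    (fun k hk => (hbound n hn k (mem_range_succ_iff.1 hk)).2)
    (fun k hk hkδ => hgap _ (two_mul_div_sq_mem_Icc (mem_range_succ_iff.1 hk))
      (by rwa [dist_eq]))).trans ?_
  have hcard : (#((range (n * (n - 1) / 2 + 1)).filter
      fun k : ℕ => δ ≤ |2 * (k : ℝ) / (n : ℝ) ^ 2 - u|) : ℝ) ≤ (n : ℝ) ^ 2 := by
    exact_mod_cast (card_filter_le _ _).trans
      ((card_range _).trans_le (Nat.mul_sub_one_div_two_add_one_le_sq (by omega)))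
  calc _ ≤ (n : ℝ) ^ 2 * (C / c * (n : ℝ) ^ 2) * exp ((n : ℝ) ^ 2 * -(3 * ε / 4)) := by
        rw [show C * n / (c * (n : ℝ)⁻¹) = C / c * (n : ℝ) ^ 2 by field_simp]
        gcongr
        linarith
    _ = C / c * ((n : ℝ) ^ 2) ^ 2 * exp ((n : ℝ) ^ 2 * -(3 * ε / 4)) := by ring
    _ ≤ exp (ε / 4 * (n : ℝ) ^ 2) * exp ((n : ℝ) ^ 2 * -(3 * ε / 4)) := by gcongr
    _ = exp (-(ε / 2) * (n : ℝ) ^ 2) := by rw [← exp_add]; ring_nf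
end
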